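/- Let A be a connected graph on [n] with weighted Laplacian ℒ(x) (weights bounded as in the contextual BTL model), and define α_{ij}(x) = π_i(x) − π_j(x) with π(x) = 1{x∈Ω}·|A|·ℒ†(x)(e_{i₀} − e_{j₀}). Then the Neyman-orthogonality identity holds: for every x ∈ Ω and every h ∈ ℝⁿ, (1/|A|)·Σ_{(i,j)∈E(A)} α_{ij}(x)·ψ'(θ_i(x) − θ_j(x))·(h_i − h_j) = h_{i₀} − h_{j₀}. -/

import Mathlib

open Matrix BigOperators Classical

/-- The four Penrose conditions characterizing the Moore–Penrose pseudoinverse. -/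
def IsMoorePenrose {n : ℕ} (M Mp : Matrix (Fin n) (Fin n) ℝ) : Prop :=
  M * Mp * M = M ∧ Mp * M * Mp = Mp ∧ (M * Mp)ᵀ = M * Mp ∧ (Mp * M)ᵀ = Mp * M

/-- Derivative of the logistic function: `ψ'(t) = e^{−t}/(1+e^{−t})²`. -/
noncomputable def logisticDeriv (t : ℝ) : ℝ := Real.exp (-t) / (1 + Real.exp (-t)) ^ 2

/-!
The weighted Laplacian `ℒ = diag(W 1) − W` of a symmetric nonnegative weight matrix `W` has the
bilinear form `pᵀ ℒ q = Σ_{i<j} w_ij (p_i − p_j)(q_i − q_j)`; for `p = π(x)`, `q = h` this is the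
edge sum of the theorem. If the positive weights span a connected graph, the form shows that
`ker ℒ` consists of the constants, so `e_{i₀} − e_{j₀} ⊥ ker ℒ` is fixed by the orthogonal
projection `ℒ ℒ†`. Hence `πᵀ ℒ h = |A| (ℒ ℒ† (e_{i₀} − e_{j₀}))ᵀ h = |A| (h_{i₀} − h_{j₀})`.
-/

lemma logisticDeriv_pos (t : ℝ) : 0 < logisticDeriv t := by
  unfold logisticDeriv
  positivity

lemma logisticDeriv_neg (t : ℝ) : logisticDeriv (-t) = logisticDeriv t := by
  have hexp : 0 < Real.exp t := Real.exp_pos t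
  simp only [logisticDeriv, neg_neg, Real.exp_neg]
  field_simp
  ring

lemma SimpleGraph.Reachable.eq_of_forall_adj {V α : Type*} {G : SimpleGraph V} {f : V → α}
    (hf : ∀ i j, G.Adj i j → f i = f j) {u v : V} (huv : G.Reachable u v) : f u = f v := by
  obtain ⟨p⟩ := huv
  induction p with
  | nil => rfl
  | cons hadj _ ih => exact (hf _ _ hadj).trans ih

section PairSums

variable {ι M : Type*} [Fintype ι] [LinearOrder ι]

lemma sum_sum_eq_sum_sum_lt_add_swap [AddCommMonoid M] (G : ι → ι → M)
    (hdiag : ∀ i, G i i = 0) :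
    ∑ i, ∑ j, G i j = ∑ i, ∑ j, if i < j then G i j + G j i else 0 := by
  have hsplit : ∀ i j, G i j = (if i < j then G i j else 0) + if j < i then G i j else 0 := by
    intro i j
    rcases lt_trichotomy i j with hij | rfl | hji
    · simp [hij, hij.not_gt]
    · simp [hdiag]
    · simp [hji, hji.not_gt]
  calc ∑ i, ∑ j, G i j
      = ∑ i, ∑ j, ((if i < j then G i j else 0) + if j < i then G i j else 0) := by
        simp only [← hsplit]
    _ = (∑ i, ∑ j, if i < j then G i j else 0) + ∑ i, ∑ j, if j < i then G i j else 0 := by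
        simp only [Finset.sum_add_distrib]
    _ = (∑ i, ∑ j, if i < j then G i j else 0) + ∑ i, ∑ j, if i < j then G j i else 0 := by
        rw [Finset.sum_comm (f := fun i j => if j < i then G i j else 0)]
    _ = ∑ i, ∑ j, if i < j then G i j + G j i else 0 := by
        simp only [← Finset.sum_add_distrib, ite_add_ite, add_zero]

lemma Matrix.IsSymm.sum_sum_lt_pos [AddCommMonoid M] [PartialOrder M]
    [IsOrderedCancelAddMonoid M] {G : Matrix ι ι M} (hG : G.IsSymm)
    (hnonneg : ∀ i j, 0 ≤ G i j) {a b : ι} (hab : a ≠ b) (hpos : 0 < G a b) :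
    0 < ∑ i, ∑ j, if i < j then G i j else 0 := by
  wlog hlt : a < b generalizing a b
  · exact this hab.symm (hG.apply a b ▸ hpos) (hab.lt_or_gt.resolve_left hlt)
  have hterm : ∀ i j, 0 ≤ if i < j then G i j else 0 := fun i j => by
    split_ifs
    exacts [hnonneg i j, le_rfl]
  have hrow : 0 < ∑ j, if a < j then G a j else 0 :=
    Finset.sum_pos' (fun j _ => hterm a j) ⟨b, Finset.mem_univ b, by rwa [if_pos hlt]⟩
  exact Finset.sum_pos' (fun i _ => Finset.sum_nonneg fun j _ => hterm i j)
    ⟨a, Finset.mem_univ a, hrow⟩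

end PairSums

section FromRel

variable {ι : Type*} {A : Matrix ι ι ℝ}

lemma Matrix.IsSymm.eq_one_of_fromRel_adj (hA : A.IsSymm) {i j : ι}
    (hij : (SimpleGraph.fromRel fun i j => A i j = 1).Adj i j) : A i j = 1 :=
  hij.2.elim id fun hji => hA.apply j i ▸ hji

lemma sum_sum_lt_pos_of_preconnected [Fintype ι] [LinearOrder ι] (hA : A.IsSymm)
    (hnonneg : ∀ i j, 0 ≤ A i j)
    (hconn : (SimpleGraph.fromRel fun i j => A i j = 1).Preconnected) {a b : ι} (hab : a ≠ b) :
    0 < ∑ i, ∑ j, if i < j then A i j else 0 := by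
  have : Nontrivial ι := ⟨⟨a, b, hab⟩⟩
  obtain ⟨c, hac⟩ := hconn.exists_adj_of_nontrivial a
  exact hA.sum_sum_lt_pos hnonneg hac.ne (by rw [hA.eq_one_of_fromRel_adj hac]; exact one_pos)

end FromRel

section WeightedLaplacian

variable {ι R : Type*} [Fintype ι] [DecidableEq ι]

def weightedLaplacian [Ring R] (w : Matrix ι ι R) : Matrix ι ι R :=
  diagonal (fun i => ∑ j, w i j) - w

lemma isSymm_weightedLaplacian [Ring R] {w : Matrix ι ι R} (hw : w.IsSymm) :
    (weightedLaplacian w).IsSymm := by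
  rw [IsSymm, weightedLaplacian, transpose_sub, diagonal_transpose, hw.eq]

lemma dotProduct_weightedLaplacian_mulVec [CommRing R] [LinearOrder ι] {w : Matrix ι ι R}
    (hw : w.IsSymm) (p q : ι → R) :
    p ⬝ᵥ (weightedLaplacian w *ᵥ q)
      = ∑ i, ∑ j, if i < j then w i j * (p i - p j) * (q i - q j) else 0 := by
  have hrow : p ⬝ᵥ (weightedLaplacian w *ᵥ q) = ∑ i, ∑ j, w i j * p i * (q i - q j) := by
    rw [weightedLaplacian, sub_mulVec, dotProduct_sub]
    simp only [dotProduct, mulVec_diagonal]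
    simp only [mulVec, dotProduct, Finset.sum_mul, Finset.mul_sum, ← Finset.sum_sub_distrib]
    refine Fintype.sum_congr _ _ fun i => Fintype.sum_congr _ _ fun j => ?_
    ring
  rw [hrow, sum_sum_eq_sum_sum_lt_add_swap _ (by simp)]
  refine Fintype.sum_congr _ _ fun i => Fintype.sum_congr _ _ fun j => ?_
  rw [hw.apply i j]
  split_ifs <;> ring

lemma eq_of_weightedLaplacian_mulVec_eq_zero [CommRing R] [LinearOrder R] [IsStrictOrderedRing R]
    [LinearOrder ι] {w : Matrix ι ι R} (hw : w.IsSymm) (hnonneg : ∀ i j, 0 ≤ w i j)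
    {v : ι → R} (hv : weightedLaplacian w *ᵥ v = 0) {i j : ι} (hij : 0 < w i j) :
    v i = v j := by
  wlog hlt : i < j generalizing i j
  · rcases (not_lt.1 hlt).lt_or_eq with hji | rfl
    · exact (this (by rwa [hw.apply]) hji).symm
    · rfl
  have hterm : ∀ k l, 0 ≤ if k < l then w k l * (v k - v l) * (v k - v l) else 0 := by
    intro k l
    split_ifs
    · rw [mul_assoc]
      exact mul_nonneg (hnonneg k l) (mul_self_nonneg _)
    · exact le_rfl
  have hform : ∑ k, ∑ l, (if k < l then w k l * (v k - v l) * (v k - v l) else 0) = 0 := by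
    rw [← dotProduct_weightedLaplacian_mulVec hw, hv, dotProduct_zero]
  have hrow := (Finset.sum_eq_zero_iff_of_nonneg fun k _ =>
    Finset.sum_nonneg fun l _ => hterm k l).1 hform i (Finset.mem_univ i)
  have hentry := (Finset.sum_eq_zero_iff_of_nonneg fun l _ => hterm i l).1 hrow j
    (Finset.mem_univ j)
  rw [if_pos hlt, mul_assoc] at hentry
  exact sub_eq_zero.1 (mul_self_eq_zero.1 ((mul_eq_zero.1 hentry).resolve_left hij.ne'))

lemma eq_of_weightedLaplacian_mulVec_eq_zero_of_preconnected [CommRing R] [LinearOrder R]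
    [IsStrictOrderedRing R] [LinearOrder ι] {w : Matrix ι ι R} (hw : w.IsSymm)
    (hnonneg : ∀ i j, 0 ≤ w i j) {G : SimpleGraph ι} (hG : G.Preconnected)
    (hpos : ∀ i j, G.Adj i j → 0 < w i j) {v : ι → R} (hv : weightedLaplacian w *ᵥ v = 0)
    (i j : ι) : v i = v j :=
  (hG i j).eq_of_forall_adj fun _ _ hadj =>
    eq_of_weightedLaplacian_mulVec_eq_zero hw hnonneg hv (hpos _ _ hadj)

end WeightedLaplacian

namespace IsMoorePenrose

variable {n : ℕ} {M Mp : Matrix (Fin n) (Fin n) ℝ}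

lemma mul_mul_self (h : IsMoorePenrose M Mp) (hM : M.IsSymm) : M * (M * Mp) = M := by
  calc M * (M * Mp) = Mᵀ * (M * Mp)ᵀ := by rw [hM.eq, h.2.2.1]
    _ = (M * Mp * M)ᵀ := (transpose_mul _ _).symm
    _ = M := by rw [h.1, hM.eq]

/-- `M Mp` is the orthogonal projection onto `range M = (ker M)ᗮ`. -/
lemma mul_mulVec_eq_self (h : IsMoorePenrose M Mp) (hM : M.IsSymm) {u : Fin n → ℝ}
    (hu : ∀ z, M *ᵥ z = 0 → u ⬝ᵥ z = 0) : (M * Mp) *ᵥ u = u := by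
  set v := u - (M * Mp) *ᵥ u
  have hPv : (M * Mp) *ᵥ v = 0 := by
    rw [mulVec_sub, mulVec_mulVec, ← Matrix.mul_assoc, h.1, sub_self]
  have hMv : M *ᵥ v = 0 := by
    rw [← h.mul_mul_self hM, ← mulVec_mulVec, hPv, mulVec_zero]
  have hvv : v ⬝ᵥ v = 0 := by
    calc v ⬝ᵥ v = u ⬝ᵥ v - v ⬝ᵥ ((M * Mp) *ᵥ u) := by
          rw [sub_dotProduct, dotProduct_comm v]
      _ = 0 := by
        rw [hu v hMv, dotProduct_mulVec, ← mulVec_transpose, h.2.2.1, hPv, zero_dotProduct,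
          sub_zero]
  exact (sub_eq_zero.1 (dotProduct_self_eq_zero.1 hvv)).symm

lemma mulVec_dotProduct_mulVec (h : IsMoorePenrose M Mp) (hM : M.IsSymm) {u : Fin n → ℝ}
    (hu : ∀ z, M *ᵥ z = 0 → u ⬝ᵥ z = 0) (x : Fin n → ℝ) :
    (Mp *ᵥ u) ⬝ᵥ (M *ᵥ x) = u ⬝ᵥ x := by
  rw [dotProduct_mulVec, ← mulVec_transpose, hM.eq, mulVec_mulVec, h.mul_mulVec_eq_self hM hu]

end IsMoorePenrose

lemma IsMoorePenrose.pinv_mulVec_dotProduct_weightedLaplacian_mulVec {n : ℕ}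
    {w Lp : Matrix (Fin n) (Fin n) ℝ} (hLp : IsMoorePenrose (weightedLaplacian w) Lp)
    (hw : w.IsSymm) (hnonneg : ∀ i j, 0 ≤ w i j) {G : SimpleGraph (Fin n)} (hG : G.Preconnected)
    (hpos : ∀ i j, G.Adj i j → 0 < w i j) (a b : Fin n) (x : Fin n → ℝ) :
    (Lp *ᵥ (Pi.single a 1 - Pi.single b 1)) ⬝ᵥ (weightedLaplacian w *ᵥ x) = x a - x b := by
  have hdot (z : Fin n → ℝ) : (Pi.single a 1 - Pi.single b 1) ⬝ᵥ z = z a - z b := by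
    rw [sub_dotProduct, single_one_dotProduct, single_one_dotProduct]
  rw [hLp.mulVec_dotProduct_mulVec (isSymm_weightedLaplacian hw) _ x, hdot]
  intro z hz
  rw [hdot, sub_eq_zero]
  exact eq_of_weightedLaplacian_mulVec_eq_zero_of_preconnected hw hnonneg hG hpos hz a b

section LogisticWeights

variable {ι : Type*}

noncomputable def logisticWeights (A : Matrix ι ι ℝ) (θ : ι → ℝ) : Matrix ι ι ℝ :=
  of fun i j => A i j * logisticDeriv (θ i - θ j)

variable {A : Matrix ι ι ℝ}

lemma isSymm_logisticWeights (hA : A.IsSymm) (θ : ι → ℝ) : (logisticWeights A θ).IsSymm := by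
  ext i j
  simp only [logisticWeights, transpose_apply, of_apply, hA.apply, ← neg_sub (θ i),
    logisticDeriv_neg]

lemma logisticWeights_nonneg (hA : ∀ i j, 0 ≤ A i j) (θ : ι → ℝ) (i j : ι) :
    0 ≤ logisticWeights A θ i j :=
  mul_nonneg (hA i j) (logisticDeriv_pos _).le

lemma logisticWeights_pos_of_fromRel_adj (hA : A.IsSymm) (θ : ι → ℝ) {i j : ι}
    (hij : (SimpleGraph.fromRel fun i j => A i j = 1).Adj i j) :
    0 < logisticWeights A θ i j := by
  simpa [logisticWeights, hA.eq_one_of_fromRel_adj hij] using logisticDeriv_pos _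

end LogisticWeights

theorem neyman_orthogonality_general (n : ℕ) {X : Type*} (Ωset : Set X)
    (A : Matrix (Fin n) (Fin n) ℝ)
    (hA01 : ∀ i j, A i j = 0 ∨ A i j = 1) (hAsym : Aᵀ = A)
    (hconn : (SimpleGraph.fromRel (fun i j => A i j = 1)).Connected)
    (θ : Fin n → X → ℝ)
    (L : X → Matrix (Fin n) (Fin n) ℝ)
    (hLdef : ∀ x, L x =
      Matrix.diagonal (fun i => ∑ j, A i j * logisticDeriv (θ i x - θ j x))
        - Matrix.of (fun i j => A i j * logisticDeriv (θ i x - θ j x)))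
    (Lp : X → Matrix (Fin n) (Fin n) ℝ) (hLp : ∀ x, IsMoorePenrose (L x) (Lp x))
    (i₀ j₀ : Fin n)
    (numE : ℝ) (hnumE : numE = ∑ i, ∑ j, if i < j then A i j else 0)
    (π : X → Fin n → ℝ)
    (hπ : ∀ x, π x = (if x ∈ Ωset then (1 : ℝ) else 0) •
      numE • (Lp x *ᵥ (Pi.single i₀ 1 - Pi.single j₀ 1))) :
    ∀ x ∈ Ωset, ∀ h : Fin n → ℝ,
      (1 / numE) * ∑ i, ∑ j,
        (if i < j then
          A i j * (π x i - π x j) * logisticDeriv (θ i x - θ j x) * (h i - h j)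
        else 0)
        = h i₀ - h j₀ := by
  intro x hx h
  have hA0 : ∀ i j, 0 ≤ A i j := fun i j => by rcases hA01 i j with h | h <;> simp [h]
  set w := logisticWeights A (θ · x)
  have hL : L x = weightedLaplacian w := hLdef x
  have hLp' : IsMoorePenrose (weightedLaplacian w) (Lp x) := hL ▸ hLp x
  have hsum : ∑ i, ∑ j, (if i < j then
        A i j * (π x i - π x j) * logisticDeriv (θ i x - θ j x) * (h i - h j) else 0)
      = π x ⬝ᵥ (weightedLaplacian w *ᵥ h) := by
    rw [dotProduct_weightedLaplacian_mulVec (isSymm_logisticWeights hAsym _)]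
    refine Fintype.sum_congr _ _ fun i => Fintype.sum_congr _ _ fun j => ?_
    split_ifs
    · simp only [logisticWeights, of_apply]
      ring
    · rfl
  rw [hsum, hπ x, if_pos hx, one_smul, smul_dotProduct,
    hLp'.pinv_mulVec_dotProduct_weightedLaplacian_mulVec (isSymm_logisticWeights hAsym _)
      (logisticWeights_nonneg hA0 _) hconn.preconnected
      (fun _ _ => logisticWeights_pos_of_fromRel_adj hAsym _),
    smul_eq_mul, ← mul_assoc]
  rcases eq_or_ne i₀ j₀ with rfl | hne
  · simp
  have hnumE_pos : 0 < numE :=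
    hnumE ▸ sum_sum_lt_pos_of_preconnected hAsym hA0 hconn.preconnected hne
  rw [one_div, inv_mul_cancel₀ hnumE_pos.ne', one_mul]

/-- **Neyman orthogonality.** With
`π(x) = 1{x∈Ω}·|A|·ℒ†(x)(e_{i₀} − e_{j₀})` and `α_{ij}(x) = π_i(x) − π_j(x)`, for every
`x ∈ Ω` and `h ∈ ℝⁿ`,
`(1/|A|) Σ_{(i,j)∈E(A)} α_{ij}(x) ψ'(θ_i(x) − θ_j(x)) (h_i − h_j) = h_{i₀} − h_{j₀}`. -/
theorem neyman_orthogonality (n : ℕ) {X : Type*} (Ωset : Set X)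
    (A : Matrix (Fin n) (Fin n) ℝ)
    (hA01 : ∀ i j, A i j = 0 ∨ A i j = 1) (hAsym : Aᵀ = A) (hAdiag : ∀ i, A i i = 0)
    (hconn : (SimpleGraph.fromRel (fun i j => A i j = 1)).Connected)
    (θ : Fin n → X → ℝ)
    (L : X → Matrix (Fin n) (Fin n) ℝ)
    (hLdef : ∀ x, L x =
      Matrix.diagonal (fun i => ∑ j, A i j * logisticDeriv (θ i x - θ j x))
        - Matrix.of (fun i j => A i j * logisticDeriv (θ i x - θ j x)))
    (Lp : X → Matrix (Fin n) (Fin n) ℝ) (hLp : ∀ x, IsMoorePenrose (L x) (Lp x))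
    (i₀ j₀ : Fin n)
    (numE : ℝ) (hnumE : numE = ∑ i, ∑ j, if i < j then A i j else 0)
    (π : X → Fin n → ℝ)
    (hπ : ∀ x, π x = (if x ∈ Ωset then (1 : ℝ) else 0) •
      numE • (Lp x *ᵥ (Pi.single i₀ 1 - Pi.single j₀ 1))) :
    ∀ x ∈ Ωset, ∀ h : Fin n → ℝ,
      (1 / numE) * ∑ i, ∑ j,
        (if i < j then
          A i j * (π x i - π x j) * logisticDeriv (θ i x - θ j x) * (h i - h j)
        else 0)
        = h i₀ - h j₀ :=
  neyman_orthogonality_general n Ωset A hA01 hAsym hconn θ L hLdef Lp hLp i₀ j₀ numE hnumE π hπ
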